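/- arXiv:math/9602216 — 2 statements merged into one kernel-verified Lean document; each statement's English description precedes it below -/
import Mathlib

section
/- (Fact 2.7.) Let κ be a measurable cardinal and λ ≥ κ a cardinal. There exist a linear order I of cardinality λ and a sequence ⟨A_i : i ≤ λ⟩ of pairwise disjoint subsets of I, each of cardinality κ, with I = ⋃_{i≤λ} A_i, such that for every X ⊆ λ + 1 with λ ∈ X, the suborder of I with underlying set ⋃_{i∈X} A_i is nicely embedded in I. -/
open Filter Cardinal

universe u w

/-- `I` is nicely embedded in `J` (along the inclusion `e : I ↪o J`): there are a nonempty
set `S` and an ultrafilter `D` on `S` together with an order embedding of `J` into the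
ultrapower `I^S/D` whose restriction to `I` is the canonical diagonal embedding. -/
def NicelyEmbedded {I : Type u} {J : Type w} [LinearOrder I] [LinearOrder J]
    (e : I ↪o J) : Prop :=
  ∃ (S : Type u) (_ : Nonempty S) (D : Ultrafilter S)
    (g : J ↪o Filter.Germ (D : Filter S) I),
    ∀ t : I, g (e t) = (↑t : Filter.Germ (D : Filter S) I)

/-- `κ` is a measurable cardinal: it is uncountable and carries a `κ`-complete
nonprincipal ultrafilter on `κ`. -/
def IsMeasurableCardinal (κ : Cardinal.{u}) : Prop :=
  ℵ₀ < κ ∧ ∃ D : Ultrafilter κ.ord.ToType,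
    (∀ x, D ≠ pure x) ∧ CardinalInterFilter (D : Filter κ.ord.ToType) κ

/-!
Take `I = (λ + 1) ×ₗ κᵒᵈ` with pieces `A i = {i} ×ₗ κᵒᵈ`, and let `X ∋ λ`. A point `(j, β)` with
`j ∉ X` lies in a gap of `⋃_{i ∈ X} A i`, just below the piece `A i` where `i` is the least
element of `X` above `j`. For a finite `F ⊆ I`, the gap points of `F` can be pushed, order
preservingly, to the bottom of those pieces, below every point of `F`: `κᵒᵈ` has no least
element. An ultrafilter on `Finset I` containing every cone `{G | F ⊆ G}` glues these
finite approximations into an embedding of `I` into the ultrapower of `⋃_{i ∈ X} A i` fixing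
that suborder pointwise.
-/
lemma NicelyEmbedded.of_forall_finset {I J : Type u} [LinearOrder I] [LinearOrder J]
    (e : I ↪o J)
    (h : ∀ F : Finset J, ∃ f : J → I, (∀ t, f (e t) = t) ∧ StrictMonoOn f F) :
    NicelyEmbedded e := by
  choose f hfe hmono using h
  let D : Ultrafilter (Finset J) := .of atTop
  have hD (F : Finset J) : ∀ᶠ G in (D : Filter (Finset J)), F ≤ G :=
    Ultrafilter.of_le atTop (eventually_ge_atTop F)
  refine ⟨Finset J, inferInstance, D,
    OrderEmbedding.ofStrictMono (fun p ↦ ((fun F ↦ f F p : Finset J → I) : Germ _ I)) ?_,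
    fun t ↦ congrArg _ (funext fun F ↦ hfe F t)⟩
  intro p q hpq
  exact Germ.coe_lt.2 <| (hD {p, q}).mono fun F hF ↦
    hmono F (hF (by simp)) (hF (by simp)) hpq

lemma Finset.exists_strictMonoOn_forall_lt {α β : Type*} [LinearOrder α] [LinearOrder β]
    [NoMinOrder β] [Nonempty β] (s : Finset α) (B : Finset β) :
    ∃ f : α → β, StrictMonoOn f s ∧ ∀ x ∈ s, ∀ b ∈ B, f x < b := by
  classical
  induction s using Finset.induction_on_min with
  | empty =>
    obtain ⟨m, hm⟩ := B.bddBelow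
    obtain ⟨c, hc⟩ := exists_lt m
    exact ⟨fun _ ↦ c, by simp [StrictMonoOn], by simp⟩
  | insert a s has ih =>
    obtain ⟨f, hf, hfB⟩ := ih
    obtain ⟨m, hm⟩ := (B ∪ s.image f).bddBelow
    obtain ⟨c, hc⟩ := exists_lt m
    have hcB (b) (hb : b ∈ B ∪ s.image f) : c < b := hc.trans_le (hm hb)
    have hfa (x) (hx : x ∈ s) : Function.update f a c x = f x :=
      Function.update_of_ne (has x hx).ne' _ _
    refine ⟨Function.update f a c, ?_, ?_⟩
    · simp only [Finset.coe_insert]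
      rintro x (rfl | hx) y (rfl | hy) hxy
      · exact absurd hxy (lt_irrefl _)
      · rw [Function.update_self, hfa y hy]
        exact hcB _ (Finset.mem_union_right _ (Finset.mem_image_of_mem f hy))
      · exact absurd hxy (has x hx).not_gt
      · rw [hfa x hx, hfa y hy]
        exact hf hx hy hxy
    · simp only [Finset.mem_insert]
      rintro x (rfl | hx) b hb
      · rw [Function.update_self]
        exact hcB b (by simp [hb])
      · rw [hfa x hx]
        exact hfB x hx b hb

namespace IsCofinal

variable {ι : Type*} [LinearOrder ι] [WellFoundedLT ι] {Y : Set ι}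

noncomputable def ceil (hY : IsCofinal Y) (x : ι) : ι :=
  wellFounded_lt.min {y | y ∈ Y ∧ x ≤ y} (hY x)

variable (hY : IsCofinal Y) {x x' y : ι}

lemma ceil_mem : hY.ceil x ∈ Y :=
  (wellFounded_lt.min_mem {y | y ∈ Y ∧ x ≤ y} (hY x)).1

lemma le_ceil : x ≤ hY.ceil x :=
  (wellFounded_lt.min_mem {y | y ∈ Y ∧ x ≤ y} (hY x)).2

lemma ceil_le (hy : y ∈ Y) (hxy : x ≤ y) : hY.ceil x ≤ y :=
  wellFounded_lt.min_le (show y ∈ {y | y ∈ Y ∧ x ≤ y} from ⟨hy, hxy⟩)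

lemma ceil_eq_self (hx : x ∈ Y) : hY.ceil x = x :=
  (hY.ceil_le hx le_rfl).antisymm hY.le_ceil

lemma ceil_mono (hxx' : x ≤ x') : hY.ceil x ≤ hY.ceil x' :=
  hY.ceil_le hY.ceil_mem (hxx'.trans hY.le_ceil)

end IsCofinal

section FillGaps

variable {ι P : Type*} [LinearOrder ι] [WellFoundedLT ι] {Y : Set ι}
  (hY : IsCofinal Y) (h : Lex (ι × P) → P)

open Classical in
noncomputable def fillGaps (p : Lex (ι × P)) : Lex (ι × P) :=
  toLex (hY.ceil (ofLex p).1, if (ofLex p).1 ∈ Y then (ofLex p).2 else h p)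

lemma fillGaps_fst_mem (p : Lex (ι × P)) : (ofLex (fillGaps hY h p)).1 ∈ Y :=
  hY.ceil_mem

lemma fillGaps_of_fst_mem {p : Lex (ι × P)} (hp : (ofLex p).1 ∈ Y) : fillGaps hY h p = p := by
  simp [fillGaps, hY.ceil_eq_self hp, hp]

lemma fillGaps_lt_fillGaps [LinearOrder P] {p q : Lex (ι × P)} (hpq : p < q) (hh : h p < h q)
    (hq : (ofLex q).1 ∈ Y → h p < (ofLex q).2) : fillGaps hY h p < fillGaps hY h q := by
  obtain ⟨⟨x, a⟩, rfl⟩ := toLex.surjective p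
  obtain ⟨⟨y, b⟩, rfl⟩ := toLex.surjective q
  rw [Prod.Lex.toLex_lt_toLex'] at hpq
  obtain ⟨hxy, hab⟩ := hpq
  simp only [fillGaps, ofLex_toLex] at hh hq ⊢
  refine Prod.Lex.toLex_lt_toLex'.2 ⟨hY.ceil_mono hxy, fun hceil ↦ ?_⟩
  dsimp only at hxy hab hceil
  by_cases hx : x ∈ Y <;> by_cases hy : y ∈ Y <;> simp only [hx, hy, if_true, if_false]
  · rw [hY.ceil_eq_self hx, hY.ceil_eq_self hy] at hceil
    exact hab hceil
  · have hyx : y ≤ x := hY.le_ceil.trans_eq (hceil.symm.trans (hY.ceil_eq_self hx))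
    exact absurd (hxy.antisymm hyx ▸ hx) hy
  · exact hq hy
  · exact hh

end FillGaps

theorem nicelyEmbedded_lex_of_isCofinal {ι P : Type u} [LinearOrder ι] [WellFoundedLT ι]
    [LinearOrder P] [NoMinOrder P] [Nonempty P] {Y : Set ι} (hY : IsCofinal Y) :
    NicelyEmbedded (OrderEmbedding.subtype (· ∈ {p : Lex (ι × P) | (ofLex p).1 ∈ Y})) := by
  refine NicelyEmbedded.of_forall_finset _ fun F ↦ ?_
  obtain ⟨h, hmono, hlt⟩ := F.exists_strictMonoOn_forall_lt (F.image fun q ↦ (ofLex q).2)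
  refine ⟨fun p ↦ ⟨fillGaps hY h p, fillGaps_fst_mem hY h p⟩,
    fun t ↦ Subtype.ext (fillGaps_of_fst_mem hY h t.2), fun p hp q hq hpq ↦ ?_⟩
  exact Subtype.mk_lt_mk.2 <| fillGaps_lt_fillGaps hY h hpq (hmono hp hq hpq)
    fun _ ↦ hlt p hp _ (Finset.mem_image_of_mem _ hq)

lemma Cardinal.mk_lex_fst_fiber {ι P : Type u} (x : ι) :
    #{p : Lex (ι × P) | (ofLex p).1 = x} = #P :=
  Cardinal.mk_congr
    { toFun p := (ofLex p.1).2
      invFun b := ⟨toLex (x, b), rfl⟩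
      left_inv := by rintro ⟨p, rfl⟩; rfl
      right_inv _ := rfl }

namespace Ordinal

lemma coe_toType_add_one_le {o : Ordinal.{u}} (x : (o + 1).ToType) : (x : Ordinal) ≤ o :=
  Order.lt_add_one_iff.1 (ToType.mk.symm x).2

lemma coe_toType_eq_iff {o i : Ordinal.{u}} (hi : i < o) {x : o.ToType} :
    (x : Ordinal) = i ↔ x = ToType.mk ⟨i, hi⟩ := by
  rw [← ToType.mk.symm_apply_eq, Subtype.ext_iff]

lemma isCofinal_toType_add_one {o : Ordinal.{u}} {X : Set Ordinal.{u}} (ho : o ∈ X) :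
    IsCofinal {x : (o + 1).ToType | (x : Ordinal) ∈ X} := by
  refine fun x ↦ ⟨ToType.mk ⟨o, Order.lt_add_one_iff.2 (le_refl o)⟩, ?_, ?_⟩
  · simpa using ho
  · rw [← ToType.mk.symm.le_iff_le, OrderIso.symm_apply_apply, ← Subtype.coe_le_coe]
    exact coe_toType_add_one_le x

lemma noMaxOrder_toType_ord {c : Cardinal.{u}} (hc : ℵ₀ ≤ c) : NoMaxOrder c.ord.ToType :=
  isSuccPrelimit_type_lt_iff.1 <| by
    rw [type_toType]
    exact (Cardinal.isSuccLimit_ord hc).isSuccPrelimit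

end Ordinal

/-- Fact 2.7: for a measurable `κ` and `λ ≥ κ`, there is a linear order `I` of
cardinality `λ` which is the union of a sequence `⟨A_i : i ≤ λ⟩` of pairwise disjoint
subsets, each of cardinality `κ`, such that for every `X ⊆ λ + 1` containing `λ`, the
suborder `⋃_{i ∈ X} A_i` is nicely embedded in `I`. -/
theorem exists_linearOrder_with_nice_pieces (κ lam : Cardinal.{u})
    (hκ : IsMeasurableCardinal κ) (hle : κ ≤ lam) :
    ∃ (I : LinOrd.{u}) (A : Ordinal.{u} → Set I),
      Cardinal.mk I = lam ∧
      (∀ i : Ordinal.{u}, i ≤ lam.ord → Cardinal.mk (A i) = κ) ∧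
      (∀ i j : Ordinal.{u}, i ≤ lam.ord → j ≤ lam.ord → i ≠ j → Disjoint (A i) (A j)) ∧
      (⋃ i ∈ Set.Iic lam.ord, A i) = Set.univ ∧
      (∀ X : Set Ordinal.{u}, X ⊆ Set.Iic lam.ord → lam.ord ∈ X →
        NicelyEmbedded (OrderEmbedding.subtype (· ∈ ⋃ i ∈ X, A i))) := by
  have hκ₀ : ℵ₀ ≤ κ := hκ.1.le
  have hlam : ℵ₀ ≤ lam := hκ₀.trans hle
  have : NoMaxOrder κ.ord.ToType := Ordinal.noMaxOrder_toType_ord hκ₀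
  have : Nonempty κ.ord.ToType :=
    Cardinal.mk_ne_zero_iff.1 (by simpa using (Cardinal.aleph0_pos.trans_le hκ₀).ne')
  have hP : #(κ.ord.ToType)ᵒᵈ = κ := (Cardinal.mk_toType κ.ord).trans (Cardinal.card_ord κ)
  refine ⟨LinOrd.of (Lex ((lam.ord + 1).ToType × (κ.ord.ToType)ᵒᵈ)),
    fun i ↦ (fun p ↦ ((ofLex p).1 : Ordinal)) ⁻¹' {i}, ?card, fun i hi ↦ ?pieces,
    fun i j _ _ hij ↦ ?disjoint, ?cover, fun X _ hX ↦ ?nice⟩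
  case card =>
    change #((lam.ord + 1).ToType × (κ.ord.ToType)ᵒᵈ) = lam
    rw [Cardinal.mk_prod, Cardinal.lift_id, Cardinal.lift_id, hP, Cardinal.mk_toType,
      Ordinal.card_add_one, Cardinal.card_ord, Cardinal.add_one_eq hlam]
    exact Cardinal.mul_eq_left hlam hle (Cardinal.aleph0_pos.trans_le hκ₀).ne'
  case pieces =>
    have hi' : i < lam.ord + 1 := Order.lt_add_one_iff.2 hi
    simp_rw [Set.preimage, Set.mem_singleton_iff, Ordinal.coe_toType_eq_iff hi']
    exact (Cardinal.mk_lex_fst_fiber _).trans hP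
  case disjoint =>
    exact Set.disjoint_left.2 fun p hi hj ↦ hij (hi.symm.trans hj)
  case cover =>
    exact Set.eq_univ_of_forall fun p ↦ Set.mem_biUnion (Ordinal.coe_toType_add_one_le _) rfl
  case nice =>
    rw [Set.biUnion_preimage_singleton]
    exact nicelyEmbedded_lex_of_isCofinal (Ordinal.isCofinal_toType_add_one hX)
end

section
/- (Lemma 5.1.) Let κ be an uncountable regular cardinal, let μ be a cardinal, and let ⟨μ_i : i < cf(μ)⟩ be a continuous strictly increasing sequence of ordinals with supremum μ and κ ≤ μ_0 < μ. Then there exist a linear order I of cardinality μ and a continuous increasing sequence ⟨I_i : i < cf(μ)⟩ of suborders of I (continuous: I_j = ⋃_{i<j} I_i for limit j) such that (1) κ ≤ |I_i| ≤ |μ_i| for each i; (2) I = ⋃_{i<cf(μ)} I_i; and (3) every t ∈ I_{i+1} \ I_i defines a Dedekind cut of I_i at least one side of which has cofinality κ: either the set {s ∈ I_i : s < t} has a cofinal subset of order type κ, or the set {s ∈ I_i : s > t} has a coinitial subset whose reverse order has order type κ. -/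
open Filter Cardinal

universe u

/-- The set `{s ∈ A : s < t}` has a cofinal subset of order type `κ`. -/
def HasCofinalKappaChainBelow (κ : Cardinal.{u}) {J : Type u} [LinearOrder J]
    (A : Set J) (t : J) : Prop :=
  ∃ f : κ.ord.ToType → J, StrictMono f ∧ (∀ a, f a ∈ A ∧ f a < t) ∧
    ∀ s ∈ A, s < t → ∃ a, s ≤ f a

/-- The set `{s ∈ A : t < s}` has a coinitial subset whose reverse order has order
type `κ`. -/
def HasCoinitialKappaChainAbove (κ : Cardinal.{u}) {J : Type u} [LinearOrder J]
    (A : Set J) (t : J) : Prop :=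
  ∃ f : κ.ord.ToType → J, StrictAnti f ∧ (∀ a, f a ∈ A ∧ t < f a) ∧
    ∀ s ∈ A, t < s → ∃ a, f a ≤ s

/-! Take for `I` a copy of `κ` followed by the reverse of `μ`, and let `I_i` be the copy of `κ`
together with the points of index `< μ_i`. Since larger indices come lower in `I`, a point of
`I_{i+1} \ I_i` lies below every point of `I_i` outside the copy of `κ`, so the part of `I_i`
below it is exactly that copy of `κ`. -/

open Ordinal OrderDual

theorem mk_toType_toOrd_lt {o c : Ordinal.{u}} (hc : c ≤ o) :
    #{w : o.ToType // (w.toOrd : Ordinal) < c} = c.card := by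
  have e : {w : o.ToType // (w.toOrd : Ordinal) < c} ≃ Set.Iio c :=
    (ToType.mk.symm.toEquiv.subtypeEquiv (q := fun a : Set.Iio o => a.1 < c)
      fun _ => Iff.rfl).trans (Equiv.subtypeSubtypeEquivSubtype fun (h : _ < c) => h.trans_le hc)
  simpa [← Cardinal.lift_inj.{u, u+1}] using mk_congr_lift e

theorem setOf_lt_iSup_Iio_subset {α : Type*} (level : α → Ordinal.{u})
    (f : Ordinal.{u} → Ordinal.{u}) (j : Ordinal.{u}) :
    {x | level x < ⨆ i : Set.Iio j, f i} ⊆ ⋃ (i) (_ : i < j), {x | level x < f i} := by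
  intro x hx
  obtain ⟨⟨i, hij⟩, hi⟩ := exists_lt_of_lt_ciSup' (show level x < _ from hx)
  exact Set.mem_biUnion hij hi

section SumLevel

variable {K : Type u} {o : Ordinal.{u}}

variable (K o) in
noncomputable def sumLevel (x : K ⊕ₗ (o.ToType)ᵒᵈ) : Ordinal.{u} :=
  Sum.elim (fun _ => 0) (fun w => ((ofDual w).toOrd : Ordinal)) (ofLex x)

theorem sumLevel_lt (ho : 0 < o) (x : K ⊕ₗ (o.ToType)ᵒᵈ) : sumLevel K o x < o := by
  rcases x with a | w
  exacts [ho, ((ofDual w).toOrd).2]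

theorem mk_setOf_sumLevel_lt {c : Ordinal.{u}} (hc₀ : 0 < c) (hc : c ≤ o) :
    #{x : K ⊕ₗ (o.ToType)ᵒᵈ | sumLevel K o x < c} = #K + c.card := by
  have e : {x : K ⊕ₗ (o.ToType)ᵒᵈ | sumLevel K o x < c} ≃
      K ⊕ {w : o.ToType // (w.toOrd : Ordinal) < c} :=
    Equiv.subtypeSum.trans <| Equiv.sumCongr (Equiv.subtypeUnivEquiv fun _ => hc₀)
      (Equiv.subtypeEquiv ofDual fun _ => Iff.rfl)
  simp [Cardinal.mk_congr e, mk_toType_toOrd_lt hc]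

theorem mk_sumLex_dual_toType : #(K ⊕ₗ (o.ToType)ᵒᵈ) = #K + o.card := by
  simp [Lex, OrderDual]

theorem hasCofinalKappaChainBelow_of_le_sumLevel {κ : Cardinal.{u}} {c : Ordinal.{u}}
    (hc : 0 < c) {t : κ.ord.ToType ⊕ₗ (o.ToType)ᵒᵈ} (ht : c ≤ sumLevel _ o t) :
    HasCofinalKappaChainBelow κ {x | sumLevel _ o x < c} t := by
  rcases t with a | w
  · exact absurd hc ht.not_gt
  refine ⟨toLex ∘ Sum.inl, Sum.Lex.inl_strictMono, fun a => ⟨hc, Sum.Lex.inl_lt_inr _ _⟩, ?_⟩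
  rintro (a | v) hv hvw
  · exact ⟨a, le_rfl⟩
  · have hvw : v < w := Sum.Lex.inr_lt_inr_iff.mp hvw
    have : ((ofDual w).toOrd : Ordinal) < (ofDual v).toOrd := ToType.mk.symm.strictMono hvw
    exact (lt_irrefl c (ht.trans_lt (this.trans hv))).elim

end SumLevel

theorem exists_linearOrder_filtration_general (κ μ : Cardinal.{u}) (hκ : ℵ₀ < κ)
    (μseq : Ordinal.{u} → Ordinal.{u})
    (hsm : ∀ i j : Ordinal.{u}, i < j → j < μ.ord.cof.ord → μseq i < μseq j)
    (hcont : ∀ j : Ordinal.{u}, j < μ.ord.cof.ord → Order.IsSuccLimit j →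
      μseq j = ⨆ i : Set.Iio j, μseq i)
    (hsup : (⨆ i : Set.Iio μ.ord.cof.ord, μseq i) = μ.ord)
    (h0 : κ.ord ≤ μseq 0)
    (hlt : ∀ i : Ordinal.{u}, i < μ.ord.cof.ord → μseq i < μ.ord) :
    ∃ (I : LinOrd.{u}) (Iseq : Ordinal.{u} → Set I),
      Cardinal.mk I = μ ∧
      (∀ i j : Ordinal.{u}, i ≤ j → j < μ.ord.cof.ord → Iseq i ⊆ Iseq j) ∧
      (∀ j : Ordinal.{u}, j < μ.ord.cof.ord → Order.IsSuccLimit j →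
        Iseq j = ⋃ (i : Ordinal.{u}) (_ : i < j), Iseq i) ∧
      (∀ i : Ordinal.{u}, i < μ.ord.cof.ord →
        κ ≤ Cardinal.mk (Iseq i) ∧ Cardinal.mk (Iseq i) ≤ (μseq i).card) ∧
      (⋃ (i : Ordinal.{u}) (_ : i < μ.ord.cof.ord), Iseq i) = Set.univ ∧
      (∀ i : Ordinal.{u}, i + 1 < μ.ord.cof.ord →
        ∀ t : I, t ∈ Iseq (i + 1) → t ∉ Iseq i →
          HasCofinalKappaChainBelow κ (Iseq i) t ∨
          HasCoinitialKappaChainAbove κ (Iseq i) t) := by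
  rcases eq_or_ne μ 0 with rfl | hμ
  · refine ⟨LinOrd.of PEmpty, fun _ => ∅, by simp, by simp, ?_, ?_, ?_, ?_⟩ <;>
      simp [Set.eq_empty_of_isEmpty]
  have hcof : 0 < μ.ord.cof.ord := by simpa [pos_iff_ne_zero] using hμ
  have hmono : ∀ i j, i ≤ j → j < μ.ord.cof.ord → μseq i ≤ μseq j := fun i j hij hj =>
    hij.eq_or_lt.elim (fun h => h ▸ le_rfl) fun h => (hsm i j h hj).le
  have hκseq : ∀ i < μ.ord.cof.ord, κ.ord ≤ μseq i := fun i hi =>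
    h0.trans (hmono 0 i zero_le hi)
  have hκμ : κ ≤ μ := Cardinal.ord_le_ord.mp (h0.trans (hlt 0 hcof).le)
  have hκpos : 0 < κ.ord := Cardinal.ord_pos.mpr (Cardinal.aleph0_pos.trans hκ)
  refine ⟨LinOrd.of (κ.ord.ToType ⊕ₗ (μ.ord.ToType)ᵒᵈ),
    fun i => {x | sumLevel _ μ.ord x < μseq i}, ?_, ?_, ?_, ?_, ?_, ?_⟩
  · simpa [mk_sumLex_dual_toType] using Cardinal.add_eq_right (hκ.le.trans hκμ) hκμ
  · exact fun i j hij hj x hx => hx.trans_le (hmono i j hij hj)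
  · intro j hj hlim
    refine subset_antisymm ?_
      (Set.iUnion₂_subset fun i hij x hx => hx.trans_le (hmono i j hij.le hj))
    dsimp only
    rw [hcont j hj hlim]
    exact setOf_lt_iSup_Iio_subset _ _ _
  · intro i hi
    have hκi := Cardinal.ord_le.mp (hκseq i hi)
    rw [mk_setOf_sumLevel_lt (hκpos.trans_le (hκseq i hi)) (hlt i hi).le, Cardinal.mk_toType,
      Cardinal.card_ord, Cardinal.add_eq_right (hκ.le.trans hκi) hκi]
    exact ⟨hκi, le_rfl⟩
  · refine Set.eq_univ_of_forall fun x => setOf_lt_iSup_Iio_subset _ _ _ ?_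
    rw [Set.mem_ofPred_eq, hsup]
    exact sumLevel_lt (Cardinal.ord_pos.mpr hμ.bot_lt) x
  · intro i hi t _ ht
    exact Or.inl (hasCofinalKappaChainBelow_of_le_sumLevel
      (hκpos.trans_le (hκseq i ((Order.lt_succ i).trans hi))) (not_lt.mp ht))

/-- Lemma 5.1: given an uncountable regular `κ`, a cardinal `μ`, and a continuous
strictly increasing sequence `⟨μ_i : i < cf(μ)⟩` of ordinals with supremum `μ` and
`κ ≤ μ_0 < μ`, there are a linear order `I` of cardinality `μ` and a continuous
increasing sequence `⟨I_i : i < cf(μ)⟩` of suborders of `I` with union `I`,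
`κ ≤ |I_i| ≤ |μ_i|`, such that every `t ∈ I_{i+1} \ I_i` defines a Dedekind cut of
`I_i` at least one side of which has cofinality `κ`. -/
theorem exists_linearOrder_filtration (κ μ : Cardinal.{u}) (hκ : ℵ₀ < κ)
    (hreg : κ.IsRegular) (μseq : Ordinal.{u} → Ordinal.{u})
    (hsm : ∀ i j : Ordinal.{u}, i < j → j < μ.ord.cof.ord → μseq i < μseq j)
    (hcont : ∀ j : Ordinal.{u}, j < μ.ord.cof.ord → Order.IsSuccLimit j →
      μseq j = ⨆ i : Set.Iio j, μseq i)
    (hsup : (⨆ i : Set.Iio μ.ord.cof.ord, μseq i) = μ.ord)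
    (h0 : κ.ord ≤ μseq 0)
    (hlt : ∀ i : Ordinal.{u}, i < μ.ord.cof.ord → μseq i < μ.ord) :
    ∃ (I : LinOrd.{u}) (Iseq : Ordinal.{u} → Set I),
      Cardinal.mk I = μ ∧
      (∀ i j : Ordinal.{u}, i ≤ j → j < μ.ord.cof.ord → Iseq i ⊆ Iseq j) ∧
      (∀ j : Ordinal.{u}, j < μ.ord.cof.ord → Order.IsSuccLimit j →
        Iseq j = ⋃ (i : Ordinal.{u}) (_ : i < j), Iseq i) ∧
      (∀ i : Ordinal.{u}, i < μ.ord.cof.ord →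
        κ ≤ Cardinal.mk (Iseq i) ∧ Cardinal.mk (Iseq i) ≤ (μseq i).card) ∧
      (⋃ (i : Ordinal.{u}) (_ : i < μ.ord.cof.ord), Iseq i) = Set.univ ∧
      (∀ i : Ordinal.{u}, i + 1 < μ.ord.cof.ord →
        ∀ t : I, t ∈ Iseq (i + 1) → t ∉ Iseq i →
          HasCofinalKappaChainBelow κ (Iseq i) t ∨
          HasCoinitialKappaChainAbove κ (Iseq i) t) :=
  exists_linearOrder_filtration_general κ μ hκ μseq hsm hcont hsup h0 hlt
end
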